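/- Let σ : ℝ⁴ → M_{4,3}(ℝ) be defined by σ(p₁,p₂,p₃,v) having diagonal entries σ_{i,i}(p,v) = σ_i·p_i(1 − p_i) for i ∈ {1,2,3} with constants σ₁, σ₂, σ₃ > 0, all other entries being zero (in particular the fourth row is identically zero). Then for every x in K = [0,1]³ × ℝ, every s ∈ ℝ⁴ satisfying ⟨s, y − x⟩ ≤ 0 for all y ∈ K, and every column index k ∈ {1,2,3}, one has ⟨s, σ_{·,k}(x)⟩ = 0, where σ_{·,k}(x) ∈ ℝ⁴ denotes the k-th column of σ(x). -/

import Mathlib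

/-! Testing the normal-cone inequality against `x` with its `k`-th coordinate moved to `0` and
to `1` shows `s_k x_k ≥ 0` and `s_k (1 - x_k) ≤ 0`. Multiplying these, `s_k² x_k (1 - x_k) ≤ 0`,
so either `s_k = 0` or `x_k ∈ {0, 1}`; in both cases `s_k σ_k x_k (1 - x_k)`, the only
nonzero term of `⟨s, σ_{·,k}(x)⟩`, vanishes. -/

/-- The diffusion coefficient `σ : ℝ⁴ → M_{4,3}(ℝ)` of the fractional stochastic
Hodgkin–Huxley model: diagonal entries `σᵢ pᵢ (1 - pᵢ)` for `i ∈ {1,2,3}`, all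
other entries (in particular the whole fourth row) equal to zero. -/
def hhSigma (s1 s2 s3 : ℝ) (x : Fin 4 → ℝ) : Matrix (Fin 4) (Fin 3) ℝ :=
  fun i k => if (i : ℕ) = (k : ℕ) then ![s1, s2, s3] k * x k.castSucc * (1 - x k.castSucc) else 0

open Set Function

section NormalCone

variable {ι : Type*} [Fintype ι] [DecidableEq ι]

lemma sum_mul_update_sub (s x : ι → ℝ) (j : ι) (t : ℝ) :
    ∑ i, s i * (update x j t i - x i) = s j * (t - x j) := by
  rw [Finset.sum_eq_single j (fun i _ hi => by simp [update_of_ne hi]) (by simp)]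
  simp

lemma mul_sub_nonpos_of_update_mem {K : Set (ι → ℝ)} {s x : ι → ℝ}
    (hs : ∀ y ∈ K, ∑ i, s i * (y i - x i) ≤ 0) {j : ι} {t : ℝ} (ht : update x j t ∈ K) :
    s j * (t - x j) ≤ 0 :=
  sum_mul_update_sub s x j t ▸ hs _ ht

end NormalCone

lemma mul_mul_one_sub_eq_zero_of_mul_sub_nonpos {c a : ℝ} (ha : a ∈ Icc (0 : ℝ) 1)
    (h0 : c * (0 - a) ≤ 0) (h1 : c * (1 - a) ≤ 0) : c * (a * (1 - a)) = 0 := by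
  obtain ⟨ha0, ha1⟩ := ha
  have hsq : c ^ 2 * (a * (1 - a)) ≤ 0 := by nlinarith
  rcases eq_or_ne c 0 with rfl | hc
  · simp
  · have : a * (1 - a) = 0 :=
      le_antisymm (nonpos_of_mul_nonpos_right hsq (by positivity)) (by nlinarith)
    simp [this]

lemma sum_mul_hhSigma (s1 s2 s3 : ℝ) (x s : Fin 4 → ℝ) (k : Fin 3) :
    ∑ i, s i * hhSigma s1 s2 s3 x i k =
      ![s1, s2, s3] k * (s k.castSucc * (x k.castSucc * (1 - x k.castSucc))) := by
  rw [Finset.sum_eq_single k.castSucc]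
  · simp only [hhSigma, Fin.val_castSucc, if_true]
    ring
  · intro i _ hi
    have : (i : ℕ) ≠ k := fun h => hi (Fin.ext h)
    simp [hhSigma, this]
  · simp

theorem hh_diffusion_tangency_general (s1 s2 s3 : ℝ)
    (x : Fin 4 → ℝ) (hx : ∀ i : Fin 3, x i.castSucc ∈ Set.Icc (0 : ℝ) 1)
    (s : Fin 4 → ℝ)
    (hs : ∀ y : Fin 4 → ℝ, (∀ i : Fin 3, y i.castSucc ∈ Set.Icc (0 : ℝ) 1) →
        ∑ j, s j * (y j - x j) ≤ 0)
    (k : Fin 3) :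
    ∑ i, s i * hhSigma s1 s2 s3 x i k = 0 := by
  have hmove : ∀ t ∈ Icc (0 : ℝ) 1, s k.castSucc * (t - x k.castSucc) ≤ 0 := by
    intro t ht
    refine mul_sub_nonpos_of_update_mem (K := {y | ∀ i : Fin 3, y i.castSucc ∈ Icc 0 1}) hs ?_
    intro i
    rcases eq_or_ne i k with rfl | hik
    · simpa using ht
    · simpa [update_of_ne (Fin.castSucc_injective _ |>.ne hik)] using hx i
  rw [sum_mul_hhSigma, mul_mul_one_sub_eq_zero_of_mul_sub_nonpos (hx k)
    (hmove 0 ⟨le_rfl, zero_le_one⟩) (hmove 1 ⟨zero_le_one, le_rfl⟩), mul_zero]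

/-- Diffusion part of the viability (tangency) condition for `K = [0,1]³ × ℝ`:
for every `x ∈ K`, every `s` in the normal cone `N_K(x)` and every column index
`k`, one has `⟨s, σ_{·,k}(x)⟩ = 0`. -/
theorem hh_diffusion_tangency (s1 s2 s3 : ℝ) (hs1 : 0 < s1) (hs2 : 0 < s2) (hs3 : 0 < s3)
    (x : Fin 4 → ℝ) (hx : ∀ i : Fin 3, x i.castSucc ∈ Set.Icc (0 : ℝ) 1)
    (s : Fin 4 → ℝ)
    (hs : ∀ y : Fin 4 → ℝ, (∀ i : Fin 3, y i.castSucc ∈ Set.Icc (0 : ℝ) 1) →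
        ∑ j, s j * (y j - x j) ≤ 0)
    (k : Fin 3) :
    ∑ i, s i * hhSigma s1 s2 s3 x i k = 0 :=
  hh_diffusion_tangency_general s1 s2 s3 x hx s hs k
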